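/- arXiv:1506.02979 — 3 statements merged into one kernel-verified Lean document; each statement's English description precedes it below -/
import Mathlib

section
/- Let n ≥ 2. The near-semiring 𝒩 has precisely three congruences: (1) the equality relation, (2) the universal relation 𝒩 × 𝒩, and (3) the relation (A^+(B_n) × A^+(B_n)) ∪ {(0,0)}. That is, each of these three relations is a congruence of the near-semiring 𝒩, they are pairwise distinct, and every congruence of the near-semiring 𝒩 equals one of them. -/
/-!
Common setup: the Brandt semigroup `B n`, self-maps with pointwise addition and
composition product, affine maps, the affine near-semiring `A⁺(Bₙ)`, and the
zero-symmetric near-semiring `𝒩 = A⁺(Bₙ) ∪ {0}`.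
-/

/-- The Brandt semigroup `Bₙ`: pairs `(i,j)` with `i,j ∈ [n]`, together with the
zero element `ϑ` (represented by `none`). -/
abbrev B (n : ℕ) : Type := Option (Fin n × Fin n)

/-- Addition in the Brandt semigroup: `(i,j)+(k,l) = (i,l)` if `j = k`, and `ϑ` otherwise;
`ϑ` is absorbing. -/
def badd {n : ℕ} : B n → B n → B n
  | some (i, j), some (k, l) => if j = k then some (i, l) else none
  | _, _ => none

/-- Pointwise addition of self-maps of `B n`:  `x(f+g) = xf + xg`. -/
def madd {n : ℕ} (f g : B n → B n) : B n → B n := fun x => badd (f x) (g x)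

/-- The product of self-maps of `B n`: `x(fg) = (xf)g`. -/
def mcomp {n : ℕ} (f g : B n → B n) : B n → B n := fun x => g (f x)

/-- An additive endomorphism of the Brandt semigroup. -/
def IsEndo {n : ℕ} (e : B n → B n) : Prop := ∀ a b, e (badd a b) = badd (e a) (e b)

/-- An affine map: the pointwise sum of an additive endomorphism and a constant map. -/
def IsAffine {n : ℕ} (f : B n → B n) : Prop :=
  ∃ e c, IsEndo e ∧ ∀ x, f x = badd (e x) c

/-- `A⁺(Bₙ)`: the subsemigroup of `(M(Bₙ), +)` generated by the affine maps. -/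
inductive Aplus (n : ℕ) : (B n → B n) → Prop
  | affine {f : B n → B n} : IsAffine f → Aplus n f
  | add {f g : B n → B n} : Aplus n f → Aplus n g → Aplus n (madd f g)

lemma isEndo_constBot {n : ℕ} : IsEndo (fun _ : B n => (none : B n)) := by
  intro a b; rfl

lemma isEndo_constIdem {n : ℕ} (p : Fin n) :
    IsEndo (fun _ : B n => (some (p, p) : B n)) := by
  intro a b; simp [badd]

/-- Every constant map is affine. -/
lemma isAffine_const {n : ℕ} (c : B n) : IsAffine (fun _ : B n => c) := by
  match c with
  | none => exact ⟨fun _ => none, none, isEndo_constBot, fun x => rfl⟩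
  | some (p, q) =>
      exact ⟨fun _ => some (p, p), some (p, q), isEndo_constIdem p, fun x => by simp [badd]⟩

lemma aplus_const {n : ℕ} (c : B n) : Aplus n (fun _ : B n => c) :=
  Aplus.affine (isAffine_const c)

lemma aplus_comp_endo {n : ℕ} {e : B n → B n} (he : IsEndo e)
    {f : B n → B n} (hf : Aplus n f) : Aplus n (fun x => e (f x)) := by
  induction hf with
  | affine h =>
      rename_i f0
      obtain ⟨e', c, he', hfe⟩ := h
      refine Aplus.affine ⟨fun x => e (e' x), e c, fun a b => ?_, fun x => ?_⟩
      · show e (e' (badd a b)) = badd (e (e' a)) (e (e' b))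
        rw [he', he]
      · show e (f0 x) = badd (e (e' x)) (e c)
        rw [hfe, he]
  | add h1 h2 ih1 ih2 =>
      rename_i g1 g2
      have heq : (fun x => e (madd g1 g2 x))
          = madd (fun x => e (g1 x)) (fun x => e (g2 x)) := by
        funext x; exact he (g1 x) (g2 x)
      rw [heq]
      exact Aplus.add ih1 ih2

/-- `A⁺(Bₙ)` is closed under the product. -/
lemma aplus_comp {n : ℕ} {f g : B n → B n} (hf : Aplus n f) (hg : Aplus n g) :
    Aplus n (mcomp f g) := by
  induction hg with
  | affine h =>
      rename_i g0
      obtain ⟨e, c, he, hge⟩ := h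
      have heq : mcomp f g0 = madd (fun x => e (f x)) (fun _ => c) := by
        funext x; exact hge (f x)
      rw [heq]
      exact Aplus.add (aplus_comp_endo he hf) (aplus_const c)
  | add h1 h2 ih1 ih2 =>
      exact Aplus.add ih1 ih2

/-- `𝒩 = A⁺(Bₙ) ∪ {0}`: the zero-symmetric affine near-semiring, with a new
zero element `0` (represented by `none`) adjoined to `A⁺(Bₙ)`. -/
abbrev N (n : ℕ) : Type := Option {f : B n → B n // Aplus n f}

instance (n : ℕ) : Zero (N n) := ⟨none⟩

/-- Addition in `𝒩`: `0` is the additive identity; on `A⁺(Bₙ)` it is pointwise addition. -/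
instance (n : ℕ) : Add (N n) :=
  ⟨fun a b =>
    match a, b with
    | none, b => b
    | a, none => a
    | some f, some g => some ⟨madd f.1 g.1, Aplus.add f.2 g.2⟩⟩

/-- Multiplication in `𝒩`: `0` is absorbing; on `A⁺(Bₙ)` it is the product `fg`. -/
instance (n : ℕ) : Mul (N n) :=
  ⟨fun a b =>
    match a, b with
    | some f, some g => some ⟨mcomp f.1 g.1, aplus_comp f.2 g.2⟩
    | _, _ => none⟩

/-- The element of `𝒩` determined by a map in `A⁺(Bₙ)`. -/
def ofA {n : ℕ} {f : B n → B n} (hf : Aplus n f) : N n := some ⟨f, hf⟩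

/-- The constant map `ξ_c`, as an element of `𝒩`. -/
def xiN (n : ℕ) (c : B n) : N n := ofA (aplus_const c)

/-- `𝒞 = C_{Bₙ} ∪ {0}`: the constant maps together with `0`, as a subset of `𝒩`. -/
def Cset (n : ℕ) : Set (N n) := insert 0 (Set.range (xiN n))

/-- The relation `(A⁺(Bₙ) × A⁺(Bₙ)) ∪ {(0,0)}` on `𝒩`. -/
def theta (n : ℕ) (a b : N n) : Prop := (a ≠ 0 ∧ b ≠ 0) ∨ (a = 0 ∧ b = 0)

/-- A congruence of the semigroup `(𝒩, +)`. -/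
structure IsAddCong (n : ℕ) (r : N n → N n → Prop) : Prop where
  refl : ∀ a, r a a
  symm : ∀ {a b}, r a b → r b a
  trans : ∀ {a b c}, r a b → r b c → r a c
  add_right : ∀ {a b} (c), r a b → r (a + c) (b + c)
  add_left : ∀ {a b} (c), r a b → r (c + a) (c + b)

/-- The equivalence relations on `𝒩` whose class of `0` is a right ideal:
compatible with `+` on both sides and with `·` on the right. -/
structure IsRightCong (n : ℕ) (r : N n → N n → Prop) extends IsAddCong n r : Prop where
  mul_right : ∀ {a b} (c), r a b → r (a * c) (b * c)

/-- A congruence of the near-semiring `𝒩`. -/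
structure IsNSCong (n : ℕ) (r : N n → N n → Prop) extends IsAddCong n r : Prop where
  mul_right : ∀ {a b} (c), r a b → r (a * c) (b * c)
  mul_left : ∀ {a b} (c), r a b → r (c * a) (c * b)

/-- The singleton-support map `σ^{(k,l)}_{(p,q)}` sending `(k,l)` to `(p,q)` and
everything else to `ϑ`. -/
def sgl {n : ℕ} (k l p q : Fin n) : B n → B n :=
  fun x => if x = some (k, l) then some (p, q) else none

/-- The `n`-support map `(p,q;σ)` sending `(i,p)` to `(iσ,q)` and everything else to `ϑ`. -/
def nsupp {n : ℕ} (p q : Fin n) (σ : Equiv.Perm (Fin n)) : B n → B n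
  | some (i, j) => if j = p then some (σ i, q) else none
  | none => none

/-- The endomorphism `(i,j) ↦ (iσ, jσ)` of `Bₙ`. -/
def permEndo {n : ℕ} (σ : Equiv.Perm (Fin n)) : B n → B n
  | some (i, j) => some (σ i, σ j)
  | none => none

lemma isEndo_permEndo {n : ℕ} (σ : Equiv.Perm (Fin n)) : IsEndo (permEndo σ) := by
  rintro (_ | ⟨i, j⟩) (_ | ⟨k, l⟩) <;> simp [badd, permEndo]
  by_cases h : j = k
  · simp [h, permEndo]
  · simp [h, fun hc => h (σ.injective hc), permEndo, badd]

lemma aplus_nsupp {n : ℕ} (p q : Fin n) (σ : Equiv.Perm (Fin n)) :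
    Aplus n (nsupp p q σ) := by
  refine Aplus.affine ⟨permEndo σ, some (σ p, q), isEndo_permEndo σ, ?_⟩
  rintro (_ | ⟨i, j⟩)
  · rfl
  · show nsupp p q σ (some (i, j)) = badd (some (σ i, σ j)) (some (σ p, q))
    by_cases h : j = p
    · simp [nsupp, badd, h]
    · simp [nsupp, badd, h, fun hc => h (σ.injective hc)]

lemma sgl_eq_madd {n : ℕ} (k l p q : Fin n) :
    sgl k l p q = madd (fun _ : B n => (some (p, q) : B n)) (nsupp l q (Equiv.swap k q)) := by
  funext x
  rcases x with _ | ⟨i, j⟩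
  · rfl
  · by_cases hj : j = l
    · by_cases hi : i = k
      · subst hi; subst hj
        simp [sgl, madd, nsupp, badd, Equiv.swap_apply_left]
      · have hs : Equiv.swap k q i ≠ q := fun hc =>
          hi ((Equiv.swap k q).injective (hc.trans (Equiv.swap_apply_left k q).symm))
        simp [sgl, madd, nsupp, badd, hj, hi, Ne.symm hs]
    · simp [sgl, madd, nsupp, badd, hj]

lemma aplus_sgl {n : ℕ} (k l p q : Fin n) : Aplus n (sgl k l p q) := by
  rw [sgl_eq_madd]
  exact Aplus.add (aplus_const _) (aplus_nsupp _ _ _)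

/-- The singleton-support map `σ^{(k,l)}_{(p,q)}`, as an element of `𝒩`. -/
def sglN (n : ℕ) (k l p q : Fin n) : N n := ofA (aplus_sgl k l p q)

/-- The `n`-support map `(p,q;σ)`, as an element of `𝒩`. -/
def nsuppN (n : ℕ) (p q : Fin n) (σ : Equiv.Perm (Fin n)) : N n := ofA (aplus_nsupp p q σ)

/-!
A congruence identifying `0` with some `a ≠ 0` identifies `0 = 0 · ξ_ϑ` with `a · ξ_ϑ = ξ_ϑ`, and
then everything with `ξ_ϑ`, which absorbs every sum. A congruence identifying two distinct nonzero
`f, g` identifies the constants `ξ_x · f` and `ξ_x · g` at a point `x` where they differ; right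
multiplication by a singleton-support map turns this into `ξ_c ∼ ξ_ϑ` for every `c`. Every
`f ∈ A⁺(Bₙ)` satisfies `f + ξ_d = f` for some `d`, so `f = f + ξ_d ∼ f + ξ_ϑ = ξ_ϑ`, and all
nonzero elements are identified. The third congruence is the kernel of `a ↦ (a = 0)`, since
`a + b = 0` iff `a = b = 0` and `a * b = 0` iff `a = 0 ∨ b = 0`.
-/

section Brandt

variable {n : ℕ}

lemma badd_none_right (a : B n) : badd a none = none := by
  cases a <;> rfl

lemma badd_assoc (a b c : B n) : badd (badd a b) c = badd a (badd b c) := by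
  rcases a with _ | ⟨i, j⟩ <;> rcases b with _ | ⟨k, l⟩ <;> rcases c with _ | ⟨p, q⟩ <;>
    simp only [badd] <;> split_ifs <;> simp_all

lemma exists_badd_eq_self (c : B n) : ∃ d : B n, badd c d = c := by
  rcases c with _ | ⟨p, q⟩
  · exact ⟨none, rfl⟩
  · exact ⟨some (q, q), by simp [badd]⟩

lemma madd_assoc (f g h : B n → B n) : madd (madd f g) h = madd f (madd g h) :=
  funext fun x => badd_assoc (f x) (g x) (h x)

lemma Aplus.exists_madd_const_eq_self {f : B n → B n} (hf : Aplus n f) :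
    ∃ d : B n, madd f (fun _ => d) = f := by
  induction hf with
  | affine hf =>
    obtain ⟨e, c, -, hfe⟩ := hf
    obtain ⟨d, hd⟩ := exists_badd_eq_self c
    exact ⟨d, funext fun x => by simp only [madd, hfe, badd_assoc, hd]⟩
  | add _ _ _ ih =>
    obtain ⟨d, hd⟩ := ih
    exact ⟨d, by rw [madd_assoc, hd]⟩

end Brandt

namespace N

variable {n : ℕ}

lemma add_zero (a : N n) : a + 0 = a := by
  cases a <;> rfl

lemma add_eq_zero_iff {a b : N n} : a + b = 0 ↔ a = 0 ∧ b = 0 := by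
  rcases a with _ | f <;> rcases b with _ | g <;> simp [HAdd.hAdd, Add.add]

lemma mul_eq_zero_iff {a b : N n} : a * b = 0 ↔ a = 0 ∨ b = 0 := by
  rcases a with _ | f <;> rcases b with _ | g <;> simp [HMul.hMul, Mul.mul]

lemma theta_iff {a b : N n} : theta n a b ↔ (a = 0 ↔ b = 0) := by
  unfold theta; tauto

lemma xiN_ne_zero (c : B n) : xiN n c ≠ 0 :=
  Option.some_ne_none _

lemma xiN_injective : Function.Injective (xiN n) := fun _ _ h =>
  congrFun (congrArg Subtype.val (Option.some.inj h)) none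

lemma add_xiN_none (a : N n) : a + xiN n none = xiN n none := by
  rcases a with _ | g
  · rfl
  · exact congrArg some (Subtype.ext (funext fun x => badd_none_right (g.1 x)))

lemma exists_some_add_xiN_eq_self (g : {f : B n → B n // Aplus n f}) :
    ∃ d : B n, some g + xiN n d = some g := by
  obtain ⟨d, hd⟩ := g.2.exists_madd_const_eq_self
  exact ⟨d, congrArg some (Subtype.ext hd)⟩

lemma xiN_mul_sglN (c : B n) (k l p q : Fin n) :
    xiN n c * sglN n k l p q = xiN n (sgl k l p q c) :=
  rfl

end N

section Congruences

variable (n : ℕ)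

lemma isNSCong_eq : IsNSCong n (fun a b : N n => a = b) where
  refl _ := rfl
  symm := Eq.symm
  trans := Eq.trans
  add_right _ h := h ▸ rfl
  add_left _ h := h ▸ rfl
  mul_right _ h := h ▸ rfl
  mul_left _ h := h ▸ rfl

lemma isNSCong_top : IsNSCong n (fun _ _ : N n => True) where
  refl _ := trivial
  symm _ := trivial
  trans _ _ := trivial
  add_right _ _ := trivial
  add_left _ _ := trivial
  mul_right _ _ := trivial
  mul_left _ _ := trivial

lemma isNSCong_theta : IsNSCong n (theta n) where
  refl _ := N.theta_iff.2 Iff.rfl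
  symm h := N.theta_iff.2 (N.theta_iff.1 h).symm
  trans h h' := N.theta_iff.2 ((N.theta_iff.1 h).trans (N.theta_iff.1 h'))
  add_right _ h := by rw [N.theta_iff, N.add_eq_zero_iff, N.add_eq_zero_iff, N.theta_iff.1 h]
  add_left _ h := by rw [N.theta_iff, N.add_eq_zero_iff, N.add_eq_zero_iff, N.theta_iff.1 h]
  mul_right _ h := by rw [N.theta_iff, N.mul_eq_zero_iff, N.mul_eq_zero_iff, N.theta_iff.1 h]
  mul_left _ h := by rw [N.theta_iff, N.mul_eq_zero_iff, N.mul_eq_zero_iff, N.theta_iff.1 h]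

end Congruences

namespace IsNSCong

variable {n : ℕ} {r : N n → N n → Prop}

lemma forall_of_rel_zero (hr : IsNSCong n r) {a : N n} (h0 : r 0 a) (ha : a ≠ 0) (u v : N n) :
    r u v := by
  obtain ⟨g, rfl⟩ := Option.ne_none_iff_exists'.mp ha
  have h0ϑ : r 0 (xiN n none) := hr.mul_right (xiN n none) h0
  have hϑ : ∀ u : N n, r u (xiN n none) := fun u => by
    simpa only [N.add_zero, N.add_xiN_none] using hr.add_left u h0ϑ
  exact hr.trans (hϑ u) (hr.symm (hϑ v))

lemma rel_xiN_none_of_rel_xiN_some (hr : IsNSCong n r) {k l : Fin n} {d : B n}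
    (hd : d ≠ some (k, l)) (h : r (xiN n (some (k, l))) (xiN n d)) (c : B n) :
    r (xiN n c) (xiN n none) := by
  rcases c with _ | ⟨p, q⟩
  · exact hr.refl _
  · simpa only [N.xiN_mul_sglN, sgl, if_pos, if_neg hd] using hr.mul_right (sglN n k l p q) h

lemma rel_xiN_none_of_rel_xiN (hr : IsNSCong n r) {c d : B n} (hcd : c ≠ d)
    (h : r (xiN n c) (xiN n d)) (e : B n) : r (xiN n e) (xiN n none) := by
  rcases c with _ | ⟨k, l⟩
  · obtain ⟨⟨k, l⟩, rfl⟩ := Option.ne_none_iff_exists'.mp hcd.symm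
    exact hr.rel_xiN_none_of_rel_xiN_some (Option.some_ne_none _).symm (hr.symm h) e
  · exact hr.rel_xiN_none_of_rel_xiN_some hcd.symm h e

lemma rel_xiN_none_of_rel_of_ne (hr : IsNSCong n r) {a b : N n} (hab : r a b) (hne : a ≠ b)
    (ha : a ≠ 0) (hb : b ≠ 0) (c : B n) : r (xiN n c) (xiN n none) := by
  obtain ⟨f, rfl⟩ := Option.ne_none_iff_exists'.mp ha
  obtain ⟨g, rfl⟩ := Option.ne_none_iff_exists'.mp hb
  obtain ⟨x, hx⟩ : ∃ x, f.1 x ≠ g.1 x :=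
    Function.ne_iff.mp fun h => hne (congrArg some (Subtype.ext h))
  have hfgx : r (xiN n (f.1 x)) (xiN n (g.1 x)) := hr.mul_left (xiN n x) hab
  exact hr.rel_xiN_none_of_rel_xiN hx hfgx c

lemma rel_xiN_none_of_ne_zero (hr : IsNSCong n r) (h : ∀ c, r (xiN n c) (xiN n none))
    {a : N n} (ha : a ≠ 0) : r a (xiN n none) := by
  obtain ⟨g, rfl⟩ := Option.ne_none_iff_exists'.mp ha
  obtain ⟨d, hd⟩ := N.exists_some_add_xiN_eq_self g
  simpa only [hd, N.add_xiN_none] using hr.add_left (some g) (h d)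

lemma theta_of_rel (hr : IsNSCong n r) (hzero : ∀ {a}, r 0 a → a = 0) {a b : N n}
    (h : r a b) : theta n a b :=
  N.theta_iff.2 ⟨fun ha => hzero (ha ▸ h), fun hb => hzero (hb ▸ hr.symm h)⟩

lemma rel_of_theta (hr : IsNSCong n r) (hall : ∀ {a : N n}, a ≠ 0 → r a (xiN n none))
    {a b : N n} (h : theta n a b) : r a b := by
  rcases h with ⟨ha, hb⟩ | ⟨rfl, rfl⟩
  · exact hr.trans (hall ha) (hr.symm (hall hb))
  · exact hr.refl 0

theorem eq_or_top_or_theta (hr : IsNSCong n r) :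
    (∀ a b : N n, r a b ↔ a = b) ∨ (∀ a b : N n, r a b) ∨
      (∀ a b : N n, r a b ↔ theta n a b) := by
  rcases em (∃ a, a ≠ 0 ∧ r 0 a) with ⟨a, ha, h0⟩ | h0
  · exact .inr (.inl (hr.forall_of_rel_zero h0 ha))
  have hzero : ∀ {a}, r 0 a → a = 0 := fun h => by_contra fun ha => h0 ⟨_, ha, h⟩
  rcases em (∀ a b, r a b → a = b) with hsub | hsub
  · exact .inl fun a b => ⟨hsub a b, fun h => h ▸ hr.refl a⟩
  obtain ⟨a, b, hab, hne⟩ : ∃ a b, r a b ∧ a ≠ b := by simpa using hsub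
  have hab0 := N.theta_iff.1 (hr.theta_of_rel hzero hab)
  have ha : a ≠ 0 := fun h => hne (h.trans (hab0.1 h).symm)
  have hb : b ≠ 0 := fun h => ha (hab0.2 h)
  have hall : ∀ {u : N n}, u ≠ 0 → r u (xiN n none) :=
    hr.rel_xiN_none_of_ne_zero (hr.rel_xiN_none_of_rel_of_ne hab hne ha hb)
  exact .inr (.inr fun u v => ⟨hr.theta_of_rel hzero, hr.rel_of_theta hall⟩)

end IsNSCong

/-- Let `n ≥ 2`. The near-semiring `𝒩` has precisely three congruences:
equality, the universal relation, and `(A⁺(Bₙ) × A⁺(Bₙ)) ∪ {(0,0)}`; these are pairwise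
distinct and every congruence of `𝒩` is one of them. -/
theorem stmt6 (n : ℕ) (hn : 2 ≤ n) :
    IsNSCong n (fun a b : N n => a = b) ∧
    IsNSCong n (fun _ _ : N n => True) ∧
    IsNSCong n (theta n) ∧
    ((fun a b : N n => a = b) ≠ fun _ _ : N n => True) ∧
    ((fun a b : N n => a = b) ≠ theta n) ∧
    (theta n ≠ fun _ _ : N n => True) ∧
    (∀ r : N n → N n → Prop, IsNSCong n r →
      (∀ a b : N n, r a b ↔ a = b) ∨ (∀ a b : N n, r a b) ∨
        (∀ a b : N n, r a b ↔ theta n a b)) := by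
  have hϑ : xiN n none ≠ xiN n (some (⟨0, by omega⟩, ⟨0, by omega⟩)) :=
    N.xiN_injective.ne (Option.some_ne_none _).symm
  refine ⟨isNSCong_eq n, isNSCong_top n, isNSCong_theta n, fun h => ?_, fun h => ?_, fun h => ?_,
    fun r hr => hr.eq_or_top_or_theta⟩
  · exact N.xiN_ne_zero none (congrFun₂ h (xiN n none) 0 ▸ trivial)
  · exact hϑ (congrFun₂ h _ _ ▸ N.theta_iff.2 (iff_of_false (N.xiN_ne_zero _) (N.xiN_ne_zero _)))
  · exact N.xiN_ne_zero none ((N.theta_iff.1 (congrFun₂ h 0 (xiN n none) ▸ trivial)).1 rfl)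
end

section
/- Let n ≥ 2 and let ∼ be a congruence of the near-semiring 𝒩. If (i,j;σ) ∼ (k,l;ρ) for two distinct n-support maps (i,j;σ) ≠ (k,l;ρ) (with i,j,k,l ∈ [n] and σ, ρ permutations of [n]), then there exists h ∈ A^+(B_n) with h ≠ ξ_ϑ and h ∼ ξ_ϑ. -/
/-!
Left multiplication by a constant map `ξ_x` evaluates at `x`, so two congruent maps of
`A⁺(Bₙ)` that differ at `x` yield two congruent distinct constants. Adding an idempotent
`ξ_{(p,p)}` on the left or `ξ_{(q,q)}` on the right then kills exactly one of the two
constants, which leaves a nonzero constant congruent to `ξ_ϑ`.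
-/

section

variable {n : ℕ}

lemma xiN_add_xiN (c d : B n) : xiN n c + xiN n d = xiN n (badd c d) :=
  rfl

lemma xiN_ne_zero (c : B n) : xiN n c ≠ 0 :=
  Option.some_ne_none _

lemma xiN_injective : Function.Injective (xiN n) := fun _ _ h =>
  congrFun (congrArg Subtype.val (Option.some.inj h)) none

lemma exists_apply_ne_of_ofA_ne {f g : B n → B n} {hf : Aplus n f} {hg : Aplus n g}
    (h : ofA hf ≠ ofA hg) : ∃ x, f x ≠ g x := by
  by_contra! hfg
  obtain rfl : f = g := funext hfg
  exact h rfl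

lemma IsNSCong.xiN_rel_xiN {r : N n → N n → Prop} (hr : IsNSCong n r)
    {f g : B n → B n} {hf : Aplus n f} {hg : Aplus n g} (h : r (ofA hf) (ofA hg)) (x : B n) :
    r (xiN n (f x)) (xiN n (g x)) :=
  hr.mul_left (xiN n x) h

lemma IsAddCong.xiN_some_rel_xiN_none {r : N n → N n → Prop} (hr : IsAddCong n r)
    {p q : Fin n} {d : B n} (hd : d ≠ some (p, q)) (h : r (xiN n (some (p, q))) (xiN n d)) :
    r (xiN n (some (p, q))) (xiN n none) := by
  rcases d with _ | ⟨p', q'⟩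
  · exact h
  by_cases hp : p = p'
  · subst hp
    have hq : q ≠ q' := fun hq => hd (by rw [hq])
    simpa [xiN_add_xiN, badd, Ne.symm hq] using hr.add_right (xiN n (some (q, q))) h
  · simpa [xiN_add_xiN, badd, hp] using hr.add_left (xiN n (some (p, p))) h

lemma IsAddCong.exists_xiN_some_rel_xiN_none {r : N n → N n → Prop} (hr : IsAddCong n r)
    {c d : B n} (hcd : c ≠ d) (h : r (xiN n c) (xiN n d)) :
    ∃ p q : Fin n, r (xiN n (some (p, q))) (xiN n none) := by
  rcases c with _ | ⟨p, q⟩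
  · obtain ⟨⟨p, q⟩, rfl⟩ := Option.ne_none_iff_exists'.mp hcd.symm
    exact ⟨p, q, hr.xiN_some_rel_xiN_none hcd (hr.symm h)⟩
  · exact ⟨p, q, hr.xiN_some_rel_xiN_none hcd.symm h⟩

end

theorem stmt13_general (n : ℕ) (r : N n → N n → Prop) (hcong : IsNSCong n r)
    (i j k l : Fin n) (σ ρ : Equiv.Perm (Fin n))
    (hne : nsuppN n i j σ ≠ nsuppN n k l ρ)
    (h : r (nsuppN n i j σ) (nsuppN n k l ρ)) :
    ∃ h' : N n, h' ≠ 0 ∧ h' ≠ xiN n none ∧ r h' (xiN n none) := by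
  obtain ⟨x, hx⟩ := exists_apply_ne_of_ofA_ne hne
  obtain ⟨p, q, hpq⟩ :=
    hcong.toIsAddCong.exists_xiN_some_rel_xiN_none hx (hcong.xiN_rel_xiN h x)
  exact ⟨_, xiN_ne_zero _, fun he => Option.some_ne_none _ (xiN_injective he), hpq⟩

/-- Let `n ≥ 2` and let `∼` be a congruence of the near-semiring `𝒩`.
If `(i,j;σ) ∼ (k,l;ρ)` for two distinct `n`-support maps, then some `h ∈ A⁺(Bₙ)` with
`h ≠ ξ_ϑ` satisfies `h ∼ ξ_ϑ`. -/
theorem stmt13 (n : ℕ) (hn : 2 ≤ n) (r : N n → N n → Prop) (hcong : IsNSCong n r)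
    (i j k l : Fin n) (σ ρ : Equiv.Perm (Fin n))
    (hne : nsuppN n i j σ ≠ nsuppN n k l ρ)
    (h : r (nsuppN n i j σ) (nsuppN n k l ρ)) :
    ∃ h' : N n, h' ≠ 0 ∧ h' ≠ xiN n none ∧ r h' (xiN n none) :=
  stmt13_general n r hcong i j k l σ ρ hne h
end

section
/- Let n ≥ 2 and let ∼ be a congruence of the near-semiring 𝒩. Suppose f ∼ g where f, g ∈ A^+(B_n) are of different support types, namely one of the following holds: (i) f = σ^{(k,l)}_{(p,q)} is a singleton-support map and g = ξ_{(u,v)} is a full-support constant map (u,v ∈ [n]); (ii) f = ξ_{(p,q)} is a full-support constant map and g = (i,j;σ) is an n-support map; or (iii) f = σ^{(k,l)}_{(p,q)} is a singleton-support map and g = (i,j;σ) is an n-support map. Then there exists h ∈ A^+(B_n) with h ≠ ξ_ϑ and h ∼ ξ_ϑ. -/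
/-! Left multiplication by the constant map `ξ_c` evaluates at `c`: `ξ_c f = ξ_{cf}`. Hence
`f ∼ g` forces `ξ_{cf} ∼ ξ_{cg}` for every `c ∈ Bₙ`, and maps of different support types are
separated by a point `c` at which one of them vanishes and the other does not; there
`ξ_{cg} ∼ ξ_ϑ` with `cg ≠ ϑ`. -/

section

variable {n : ℕ}

lemma sgl_apply_of_ne {k l p q a : Fin n} (ha : a ≠ k) (b : Fin n) :
    sgl k l p q (some (a, b)) = none := by
  simp [sgl, ha]

lemma nsupp_apply_of_ne {p q b : Fin n} (σ : Equiv.Perm (Fin n)) (hb : b ≠ p) (a : Fin n) :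
    nsupp p q σ (some (a, b)) = none := by
  simp [nsupp, hb]

lemma nsupp_apply_self (p q a : Fin n) (σ : Equiv.Perm (Fin n)) :
    nsupp p q σ (some (a, p)) = some (σ a, q) := by
  simp [nsupp]

lemma xiN_some_ne_xiN_none (d : Fin n × Fin n) : xiN n (some d) ≠ xiN n none := by
  intro h
  injection h with h
  simpa using congrFun (congrArg Subtype.val h) none

lemma IsNSCong.exists_rel_xiN_none {r : N n → N n → Prop} (hcong : IsNSCong n r)
    {f g : B n → B n} {hf : Aplus n f} {hg : Aplus n g} (h : r (ofA hf) (ofA hg))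
    {c : B n} {d : Fin n × Fin n} (hfc : f c = none) (hgc : g c = some d) :
    ∃ h' : N n, h' ≠ 0 ∧ h' ≠ xiN n none ∧ r h' (xiN n none) := by
  have hc : r (xiN n (f c)) (xiN n (g c)) := hcong.mul_left (xiN n c) h
  rw [hfc, hgc] at hc
  exact ⟨xiN n (some d), Option.some_ne_none _, xiN_some_ne_xiN_none d, hcong.symm hc⟩

end

/-- Let `n ≥ 2` and let `∼` be a congruence of the near-semiring `𝒩`.
Suppose `f ∼ g` where `f, g ∈ A⁺(Bₙ)` are of different support types: (i) a singleton-support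
map and a full-support constant map, (ii) a full-support constant map and an `n`-support map,
or (iii) a singleton-support map and an `n`-support map. Then some `h ∈ A⁺(Bₙ)` with
`h ≠ ξ_ϑ` satisfies `h ∼ ξ_ϑ`. -/
theorem stmt14 (n : ℕ) (hn : 2 ≤ n) (r : N n → N n → Prop) (hcong : IsNSCong n r)
    (f g : N n)
    (hcase :
      (∃ k l p q u v : Fin n, f = sglN n k l p q ∧ g = xiN n (some (u, v))) ∨
      (∃ p q i j : Fin n, ∃ σ : Equiv.Perm (Fin n),
        f = xiN n (some (p, q)) ∧ g = nsuppN n i j σ) ∨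
      (∃ k l p q i j : Fin n, ∃ σ : Equiv.Perm (Fin n),
        f = sglN n k l p q ∧ g = nsuppN n i j σ))
    (h : r f g) :
    ∃ h' : N n, h' ≠ 0 ∧ h' ≠ xiN n none ∧ r h' (xiN n none) := by
  have : Nontrivial (Fin n) := Fin.nontrivial_iff_two_le.mpr hn
  rcases hcase with ⟨k, l, p, q, u, v, rfl, rfl⟩ | ⟨p, q, i, j, σ, rfl, rfl⟩ |
      ⟨k, l, p, q, i, j, σ, rfl, rfl⟩
  · obtain ⟨a, ha⟩ := exists_ne k
    exact hcong.exists_rel_xiN_none h (sgl_apply_of_ne ha l) rfl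
  · obtain ⟨b, hb⟩ := exists_ne i
    exact hcong.exists_rel_xiN_none (hcong.symm h) (nsupp_apply_of_ne σ hb i) rfl
  · obtain ⟨a, ha⟩ := exists_ne k
    exact hcong.exists_rel_xiN_none h (sgl_apply_of_ne ha i) (nsupp_apply_self i j a σ)
end
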